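/- arXiv:1104.0403 — 3 statements merged into one kernel-verified Lean document; each statement's English description precedes it below -/
import Mathlib

section
/- Let q ∈ ℂ be nonzero and not a root of unity. Then for every integer n ≥ 3, the figure-eight multisum J satisfies the second-order inhomogeneous q-difference equation: J(n) = q^{−1−n}(q + q^n)(q^{2n} − q)/(q^n − 1) − [(1 − q^{n−2})(1 − q^{2n−1}) / ((1 − q^n)(1 − q^{2n−3}))] · J(n−2) + [q^{−2−2n}(1 − q^{n−1})²(1 + q^{n−1})(q⁴ + q^{4n} − q^{3+n} − q^{1+2n} − q^{3+2n} − q^{1+3n}) / ((1 − q^n)(1 − q^{2n−3}))] · J(n−1). -/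
/-!
Expanding `q^n (1 - q^{-n-1-i}) (1 - q^{1-n+i})` shows that the `k`-th summand of `J n` is
`∏_{i<k} (q^n + q^{-n} - q^{i+1} - q^{-i-1})`, which vanishes for `k ≥ n`; so the sums for
`J (n-2)`, `J (n-1)`, `J n` may all be taken over `k < n`. Creative telescoping provides a
certificate `G n k`, a rational function of `q^n, q^k` times the `n`-th summand, such that the
recurrence operator applied to the summands equals `G n (k+1) - G n k`. Summing over `k < n`
leaves `G n n - G n 0`, where `G n n = 0` and `-G n 0` is the inhomogeneous term.
-/

open Finset

theorem zpow_eq_pow_of_eq {G : Type*} [DivInvMonoid G] (q : G) {e : ℤ} {k : ℕ} (h : e = k) :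
    q ^ e = q ^ k := by
  rw [h, zpow_natCast]

theorem zpow_eq_inv_pow_of_eq {G : Type*} [DivisionMonoid G] (q : G) {e : ℤ} {k : ℕ}
    (h : e = -k) : q ^ e = (q ^ k)⁻¹ := by
  rw [h, zpow_neg, zpow_natCast]

variable {K : Type*} [Field K]

theorem one_sub_pow_ne_zero {q : K} (hq : ∀ j : ℕ, 0 < j → q ^ j ≠ 1) {j : ℕ} (hj : 0 < j) :
    1 - q ^ j ≠ 0 :=
  sub_ne_zero.mpr (hq j hj).symm

noncomputable def habiroTerm (q : K) (n k : ℕ) : K :=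
  ∏ i ∈ range k, (q ^ n + (q ^ n)⁻¹ - q ^ (i + 1) - (q ^ (i + 1))⁻¹)

theorem habiroTerm_succ (q : K) (n k : ℕ) :
    habiroTerm q n (k + 1) =
      habiroTerm q n k * (q ^ n + (q ^ n)⁻¹ - q ^ (k + 1) - (q ^ (k + 1))⁻¹) :=
  prod_range_succ _ _

theorem habiroTerm_eq_zero (q : K) {n k : ℕ} (hn : 0 < n) (hk : n ≤ k) :
    habiroTerm q n k = 0 := by
  apply prod_eq_zero (i := n - 1) (mem_range.mpr (by omega))
  rw [Nat.sub_add_cancel hn]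
  ring

theorem habiroTerm_eq_zpow_mul_prod {q : K} (hq0 : q ≠ 0) (n k : ℕ) :
    habiroTerm q n k =
      q ^ ((n : ℤ) * (k : ℤ)) * (∏ i ∈ range k, (1 - q ^ (-(n : ℤ) - 1 - (i : ℤ)))) *
        (∏ i ∈ range k, (1 - q ^ ((1 : ℤ) - (n : ℤ) + (i : ℤ)))) := by
  have pow_eq_prod : (q ^ n) ^ k = ∏ _i ∈ range k, q ^ n := by rw [prod_const, card_range]
  rw [zpow_mul, zpow_natCast, zpow_natCast, pow_eq_prod, ← prod_mul_distrib, ← prod_mul_distrib]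
  refine prod_congr rfl fun i _ => ?_
  rw [zpow_eq_inv_pow_of_eq q (k := n + i + 1) (by push_cast; ring),
    show (1 : ℤ) - n + i = ((i + 1 : ℕ) : ℤ) - n by push_cast; ring, zpow_sub₀ hq0,
    zpow_natCast, zpow_natCast]
  field_simp
  ring

theorem habiroTerm_contiguous {q : K} (hq0 : q ≠ 0) (hq : ∀ j : ℕ, 0 < j → q ^ j ≠ 1)
    (n k : ℕ) :
    (1 - q ^ (n + k + 1)) * (1 - q ^ n) * habiroTerm q n k =
      (1 - q ^ (n + 1)) * (q ^ k - q ^ n) * habiroTerm q (n + 1) k := by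
  induction k with
  | zero => simp [habiroTerm]
  | succ k ih =>
    set u := q ^ n + (q ^ n)⁻¹ - q ^ (k + 1) - (q ^ (k + 1))⁻¹ with hu
    have factor_ratio : (1 - q ^ (n + (k + 1) + 1)) * u * (q ^ k - q ^ n) =
        (1 - q ^ (n + k + 1)) * (q ^ (k + 1) - q ^ n) *
          (q ^ (n + 1) + (q ^ (n + 1))⁻¹ - q ^ (k + 1) - (q ^ (k + 1))⁻¹) := by
      rw [hu]
      field_simp
      ring
    apply mul_left_cancel₀ (one_sub_pow_ne_zero hq (j := n + k + 1) (by omega))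
    rw [habiroTerm_succ, habiroTerm_succ]
    linear_combination (1 - q ^ (n + (k + 1) + 1)) * u * ih +
      (1 - q ^ (n + 1)) * habiroTerm q (n + 1) k * factor_ratio

/-- The certificate produced by the WZ algorithm for the figure-eight multisum. -/
noncomputable def wzCertificate (q : K) (n k : ℕ) : K :=
  (q ^ n - 1) * (q ^ 2 - q ^ (2 * n)) * (q - q ^ (2 * n)) * (q ^ 3 - q ^ (2 * n)) * q ^ k /
    (q ^ (n + 4) * (q ^ (n + k) - 1) * (q ^ (n + k) - q)) * habiroTerm q n k

theorem pow_sub_self_ne_zero {q : K} (hq0 : q ≠ 0) (hq : ∀ j : ℕ, 0 < j → q ^ j ≠ 1) {j : ℕ}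
    (hj : 1 < j) : q ^ j - q ≠ 0 := by
  obtain ⟨i, rfl⟩ : ∃ i, j = i + 1 := ⟨j - 1, by omega⟩
  rw [show q ^ (i + 1) - q = q * (q ^ i - 1) by ring]
  exact mul_ne_zero hq0 (sub_ne_zero.mpr (hq i (by omega)))

theorem wzCertificate_succ_sub {q : K} (hq0 : q ≠ 0) (hq : ∀ j : ℕ, 0 < j → q ^ j ≠ 1)
    (m k : ℕ) :
    (1 - q ^ (m + 2)) * (1 - q ^ (2 * m + 1)) * habiroTerm q (m + 2) k
      + (1 - q ^ m) * (1 - q ^ (2 * m + 3)) * habiroTerm q m k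
      - (q ^ (2 * m + 6))⁻¹ * (1 - q ^ (m + 1)) ^ 2 * (1 + q ^ (m + 1)) *
          (q ^ 4 + q ^ (4 * m + 8) - q ^ (m + 5) - q ^ (2 * m + 5) - q ^ (2 * m + 7)
            - q ^ (3 * m + 7)) * habiroTerm q (m + 1) k
      = wzCertificate q (m + 2) (k + 1) - wzCertificate q (m + 2) k := by
  have := one_sub_pow_ne_zero hq (j := m + k + 1) (by omega)
  have := one_sub_pow_ne_zero hq (j := m + 1 + k + 1) (by omega)
  have := one_sub_pow_ne_zero hq (j := m + 1) (by omega)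
  have := sub_ne_zero.mpr (hq (m + 2 + k) (by omega))
  have := sub_ne_zero.mpr (hq (m + 2 + (k + 1)) (by omega))
  have := pow_sub_self_ne_zero hq0 hq (j := m + 2 + k) (by omega)
  have := pow_sub_self_ne_zero hq0 hq (j := m + 2 + (k + 1)) (by omega)
  have lower_from_middle : (1 - q ^ m) * habiroTerm q m k =
      (1 - q ^ (m + 1)) * (q ^ k - q ^ m) * habiroTerm q (m + 1) k / (1 - q ^ (m + k + 1)) := by
    rw [eq_div_iff ‹_›]
    linear_combination habiroTerm_contiguous hq0 hq m k
  have middle_from_upper : habiroTerm q (m + 1) k =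
      (1 - q ^ (m + 1 + 1)) * (q ^ k - q ^ (m + 1)) * habiroTerm q (m + 1 + 1) k /
        ((1 - q ^ (m + 1 + k + 1)) * (1 - q ^ (m + 1))) := by
    rw [eq_div_iff (mul_ne_zero ‹_› ‹_›)]
    linear_combination habiroTerm_contiguous hq0 hq (m + 1) k
  rw [wzCertificate, wzCertificate, habiroTerm_succ, mul_right_comm (1 - q ^ m),
    lower_from_middle, middle_from_upper]
  field_simp
  ring

theorem wzCertificate_zero {q : K} (hq0 : q ≠ 0) (hq : ∀ j : ℕ, 0 < j → q ^ j ≠ 1) (m : ℕ) :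
    wzCertificate q (m + 2) 0 =
      (q ^ (m + 3))⁻¹ * (q + q ^ (m + 2)) * (q ^ (2 * m + 4) - q) * (1 - q ^ (2 * m + 1)) := by
  have := sub_ne_zero.mpr (hq (m + 2) (by omega))
  have := pow_sub_self_ne_zero hq0 hq (j := m + 2) (by omega)
  simp only [wzCertificate, habiroTerm, range_zero, prod_empty, pow_zero, add_zero]
  field_simp
  ring

noncomputable def figureEightSum (q : K) (n : ℕ) : K :=
  ∑ k ∈ range n, habiroTerm q n k

theorem sum_range_habiroTerm_of_le (q : K) {n N : ℕ} (hn : 0 < n) (hN : n ≤ N) :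
    ∑ k ∈ range N, habiroTerm q n k = figureEightSum q n :=
  eventually_constant_sum (fun _ hk => habiroTerm_eq_zero q hn hk) hN

theorem figureEightSum_recurrence_mul {q : K} (hq0 : q ≠ 0)
    (hq : ∀ j : ℕ, 0 < j → q ^ j ≠ 1) {m : ℕ} (hm : 0 < m) :
    (1 - q ^ (m + 2)) * (1 - q ^ (2 * m + 1)) * figureEightSum q (m + 2)
      + (1 - q ^ m) * (1 - q ^ (2 * m + 3)) * figureEightSum q m
      - (q ^ (2 * m + 6))⁻¹ * (1 - q ^ (m + 1)) ^ 2 * (1 + q ^ (m + 1)) *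
          (q ^ 4 + q ^ (4 * m + 8) - q ^ (m + 5) - q ^ (2 * m + 5) - q ^ (2 * m + 7)
            - q ^ (3 * m + 7)) * figureEightSum q (m + 1)
      = -wzCertificate q (m + 2) 0 := by
  have telescope := sum_range_sub (wzCertificate q (m + 2)) (m + 2)
  rw [← sum_congr rfl fun k _ => wzCertificate_succ_sub hq0 hq m k] at telescope
  simp only [sum_add_distrib, sum_sub_distrib, ← mul_sum] at telescope
  rwa [sum_range_habiroTerm_of_le q hm (by omega),
    sum_range_habiroTerm_of_le q (n := m + 1) (by omega) (by omega), wzCertificate,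
    habiroTerm_eq_zero q (n := m + 2) (by omega) le_rfl, mul_zero, zero_sub] at telescope

theorem figureEightSum_recurrence {q : K} (hq0 : q ≠ 0) (hq : ∀ j : ℕ, 0 < j → q ^ j ≠ 1)
    {m : ℕ} (hm : 0 < m) :
    figureEightSum q (m + 2) =
      (q ^ (m + 3))⁻¹ * (q + q ^ (m + 2)) * (q ^ (2 * m + 4) - q) / (q ^ (m + 2) - 1)
      - (1 - q ^ m) * (1 - q ^ (2 * m + 3)) / ((1 - q ^ (m + 2)) * (1 - q ^ (2 * m + 1))) *
          figureEightSum q m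
      + (q ^ (2 * m + 6))⁻¹ * (1 - q ^ (m + 1)) ^ 2 * (1 + q ^ (m + 1)) *
          (q ^ 4 + q ^ (4 * m + 8) - q ^ (m + 5) - q ^ (2 * m + 5) - q ^ (2 * m + 7)
            - q ^ (3 * m + 7)) / ((1 - q ^ (m + 2)) * (1 - q ^ (2 * m + 1))) *
          figureEightSum q (m + 1) := by
  have := one_sub_pow_ne_zero hq (j := m + 2) (by omega)
  have := one_sub_pow_ne_zero hq (j := 2 * m + 1) (by omega)
  have := sub_ne_zero.mpr (hq (m + 2) (by omega))
  have cleared := figureEightSum_recurrence_mul hq0 hq hm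
  rw [wzCertificate_zero hq0 hq] at cleared
  field_simp at cleared ⊢
  linear_combination (q ^ (m + 2) - 1) * cleared

/-- The Habiro multisum `J n` for the colored Jones polynomial of the
figure-eight knot satisfies, for `q` nonzero and not a root of unity and
`n ≥ 3`, the second-order inhomogeneous q-difference equation produced by the
WZ algorithm. -/
theorem figure_eight_second_order_recursion (q : ℂ) (hq : q ≠ 0)
    (hqru : ∀ k : ℕ, 0 < k → q ^ k ≠ 1)
    (J : ℕ → ℂ)
    (hJ : ∀ n : ℕ, J n = ∑ k ∈ Finset.range n,
        q ^ ((n : ℤ) * (k : ℤ)) *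
          (∏ i ∈ Finset.range k, (1 - q ^ (-(n : ℤ) - 1 - (i : ℤ)))) *
          (∏ i ∈ Finset.range k, (1 - q ^ ((1 : ℤ) - (n : ℤ) + (i : ℤ)))))
    (n : ℕ) (hn : 3 ≤ n) :
    J n = q ^ (-1 - (n : ℤ)) * (q + q ^ (n : ℤ)) * (q ^ (2 * (n : ℤ)) - q) /
            (q ^ (n : ℤ) - 1)
      - (1 - q ^ ((n : ℤ) - 2)) * (1 - q ^ (2 * (n : ℤ) - 1)) /
          ((1 - q ^ (n : ℤ)) * (1 - q ^ (2 * (n : ℤ) - 3))) * J (n - 2)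
      + q ^ (-2 - 2 * (n : ℤ)) * (1 - q ^ ((n : ℤ) - 1)) ^ 2 *
          (1 + q ^ ((n : ℤ) - 1)) *
          (q ^ (4 : ℤ) + q ^ (4 * (n : ℤ)) - q ^ (3 + (n : ℤ)) -
            q ^ (1 + 2 * (n : ℤ)) - q ^ (3 + 2 * (n : ℤ)) - q ^ (1 + 3 * (n : ℤ))) /
          ((1 - q ^ (n : ℤ)) * (1 - q ^ (2 * (n : ℤ) - 3))) * J (n - 1) := by
  have hJS : J = figureEightSum q := funext fun n =>
    (hJ n).trans (sum_congr rfl fun k _ => (habiroTerm_eq_zpow_mul_prod hq n k).symm)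
  obtain ⟨m, rfl⟩ : ∃ m, n = m + 2 := ⟨n - 2, by omega⟩
  have pos (e : ℤ) (k : ℕ) (h : e = k) : q ^ e = q ^ k := zpow_eq_pow_of_eq q h
  have neg (e : ℤ) (k : ℕ) (h : e = -k) : q ^ e = (q ^ k)⁻¹ := zpow_eq_inv_pow_of_eq q h
  rw [neg (-1 - ↑(m + 2)) (m + 3) (by omega), neg (-2 - 2 * ↑(m + 2)) (2 * m + 6) (by omega),
    pos (↑(m + 2)) (m + 2) rfl, pos (2 * ↑(m + 2)) (2 * m + 4) (by omega),
    pos (↑(m + 2) - 2) m (by omega), pos (2 * ↑(m + 2) - 1) (2 * m + 3) (by omega),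
    pos (2 * ↑(m + 2) - 3) (2 * m + 1) (by omega), pos (↑(m + 2) - 1) (m + 1) (by omega),
    pos 4 4 rfl, pos (4 * ↑(m + 2)) (4 * m + 8) (by omega), pos (3 + ↑(m + 2)) (m + 5) (by omega),
    pos (1 + 2 * ↑(m + 2)) (2 * m + 5) (by omega), pos (3 + 2 * ↑(m + 2)) (2 * m + 7) (by omega),
    pos (1 + 3 * ↑(m + 2)) (3 * m + 7) (by omega), Nat.add_sub_cancel, hJS]
  exact figureEightSum_recurrence hq hqru (by omega)
end

section
/- Define a_{j,0}(m) = â_j(m, 1) and a_{j,1}(m) = 2·(∂â_j/∂q)(m, 1) for j = 0, 1, 2, 3 (these are the zeroth and first Taylor coefficients in ℏ of a_j(m, ℏ) = â_j(m, e^{2ℏ}) at ℏ = 0). Then for all m ∈ ℂ with m ≠ 0: (∑_{j=0}^{3} a_{j,1}(m)) · (m² + m^{−2} − 3) = (2m² − 2m^{−2}) · (∑_{j=0}^{3} j·a_{j,0}(m)). Equivalently, in the abelian branch (S₀^A(u) = 0), the first-order coefficient of the asymptotic expansion of the colored Jones polynomial of the figure-eight knot, S₁^A(u) = −(∑_j a_{j,1}(e^u))/(∑_j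 j·a_{j,0}(e^u)) d u-antiderivative, equals log(1/Δ_{4₁}(e^{2u})), where Δ_{4₁}(t) = t + t^{−1} − 3 is the Alexander polynomial of 4₁; i.e. dS₁^A/du = −(2m² − 2m^{−2})/(m² + m^{−2} − 3) with m = e^u. -/
/-- The coefficients `â_j(m, q)` of the noncommutative A-polynomial
`Â_{4₁}(l̂, m̂²; q) = ∑_{j=0}^{3} â_j(m̂, q) l̂^j` of the figure-eight knot. -/
noncomputable def ahatFigEight : ℕ → ℂ → ℂ → ℂ
  | 0, m, q =>
      m ^ 2 * q ^ 5 * (q - m ^ 2 * q ^ 3) * (q ^ 3 - m ^ 2 * q ^ 3) *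
        (q + m ^ 2 * q ^ 3) * (q - m ^ 4 * q ^ 6) * (q ^ 3 - m ^ 4 * q ^ 6)
  | 1, m, q =>
      -(1 / (m ^ 2 * q ^ 5)) * (q - m ^ 2 * q ^ 3) * (q ^ 2 - m ^ 2 * q ^ 3) *
        (q ^ 2 + m ^ 2 * q ^ 3) * (q - m ^ 4 * q ^ 6) * (q ^ 3 - m ^ 4 * q ^ 6) *
        (q ^ 8 - 2 * m ^ 2 * q ^ 9 + m ^ 2 * q ^ 10 - m ^ 4 * q ^ 9 + m ^ 4 * q ^ 10 -
          m ^ 4 * q ^ 11 + m ^ 6 * q ^ 10 - 2 * m ^ 6 * q ^ 11 + m ^ 8 * q ^ 12)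
  | 2, m, q =>
      (1 / (m ^ 2 * q ^ 4)) * (q - m ^ 2 * q ^ 3) ^ 2 * (q + m ^ 2 * q ^ 3) *
        (q ^ 3 - m ^ 4 * q ^ 6) * (q ^ 5 - m ^ 4 * q ^ 6) *
        (q ^ 4 + m ^ 2 * q ^ 5 - 2 * m ^ 2 * q ^ 6 - m ^ 4 * q ^ 7 + m ^ 4 * q ^ 8 -
          m ^ 4 * q ^ 9 - 2 * m ^ 6 * q ^ 10 + m ^ 6 * q ^ 11 + m ^ 8 * q ^ 12)
  | 3, m, q =>
      m ^ 2 * q ^ 4 * (q - m ^ 2 * q ^ 3) * (-1 + m ^ 2 * q ^ 3) *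
        (q ^ 2 + m ^ 2 * q ^ 3) * (q ^ 3 - m ^ 4 * q ^ 6) * (q ^ 5 - m ^ 4 * q ^ 6)
  | _, _, _ => 0

/-- The zeroth-order Taylor coefficient in `ℏ` of `a_j(m, ℏ) = â_j(m, e^{2ℏ})`
at `ℏ = 0`, namely `a_{j,0}(m) = â_j(m, 1)`. -/
noncomputable def aCoeff0 (j : ℕ) (m : ℂ) : ℂ := ahatFigEight j m 1

/-- The first-order Taylor coefficient in `ℏ` of `a_j(m, ℏ) = â_j(m, e^{2ℏ})`
at `ℏ = 0`, namely `a_{j,1}(m) = 2 (∂â_j/∂q)(m, 1)`. -/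
noncomputable def aCoeff1 (j : ℕ) (m : ℂ) : ℂ :=
  2 * deriv (fun q => ahatFigEight j m q) 1

/-! At `q = 1` every `â_j` carries the factor `(1 - m²)⁴ (1 + m²)³`, and
`∑ j a_{j,0}(m) = (1 - m²)⁴ (1 + m²)⁵ Δ_{4₁}(m²)`. Differentiating in `q` gives
`∑ a_{j,1}(m) = -2 (1 - m²)⁵ (1 + m²)⁶ / m²`, which is `(2m² - 2m⁻²) (1 - m²)⁴ (1 + m²)⁵`,
so both sides of the identity equal this times `Δ_{4₁}(m²)`. -/

theorem sum_natCast_mul_aCoeff0_eq {m : ℂ} (hm : m ≠ 0) :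
    ∑ j ∈ Finset.range 4, (j : ℂ) * aCoeff0 j m =
      (1 - m ^ 2) ^ 4 * (1 + m ^ 2) ^ 5 * (m ^ 2 + m ^ (-2 : ℤ) - 3) := by
  simp only [Finset.sum_range_succ, Finset.sum_range_zero, aCoeff0, ahatFigEight, zpow_neg,
    zpow_ofNat]
  field_simp
  ring

theorem sum_aCoeff1_eq {m : ℂ} (hm : m ≠ 0) :
    ∑ j ∈ Finset.range 4, aCoeff1 j m = -2 * (1 - m ^ 2) ^ 5 * (1 + m ^ 2) ^ 6 / m ^ 2 := by
  simp (disch := first | fun_prop (disch := simp [hm]) | simp [hm]) only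
    [Finset.sum_range_succ, Finset.sum_range_zero, aCoeff1, ahatFigEight, deriv_fun_mul,
      deriv_fun_sub, deriv_fun_add, deriv_fun_pow, deriv_fun_div, deriv.fun_neg, deriv_id'',
      deriv_const]
  field_simp
  ring

/-- First-order equation of the quantization hierarchy for the figure-eight
knot in the abelian branch: for `m ≠ 0`,
`(∑_j a_{j,1}(m)) (m² + m⁻² - 3) = (2m² - 2m⁻²) (∑_j j a_{j,0}(m))`.
Equivalently, the first coefficient of the abelian-branch asymptotic expansion
of the colored Jones polynomial of `4₁` satisfies
`dS₁ᴬ/du = -(2m² - 2m⁻²)/(m² + m⁻² - 3)` with `m = e^u`, i.e.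
`S₁ᴬ(u) = log (1/Δ_{4₁}(e^{2u}))` with `Δ_{4₁}(t) = t + t⁻¹ - 3` the Alexander
polynomial of `4₁`. -/
theorem figure_eight_abelian_S1 (m : ℂ) (hm : m ≠ 0) :
    (∑ j ∈ Finset.range 4, aCoeff1 j m) * (m ^ 2 + m ^ (-2 : ℤ) - 3) =
      (2 * m ^ 2 - 2 * m ^ (-2 : ℤ)) *
        (∑ j ∈ Finset.range 4, (j : ℂ) * aCoeff0 j m) := by
  rw [sum_aCoeff1_eq hm, sum_natCast_mul_aCoeff0_eq hm, zpow_neg, zpow_ofNat]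
  field_simp
  ring
end

section
/- Define a_{j,0}(m) = â_j(m, 1), a_{j,1}(m) = 2·(∂â_j/∂q)(m, 1), and a_{j,2}(m) = 2·((∂â_j/∂q)(m, 1) + (∂²â_j/∂q²)(m, 1)) for j = 0, 1, 2, 3 (these are the Taylor coefficients up to order 2 in ℏ of a_j(m, ℏ) = â_j(m, e^{2ℏ}) at ℏ = 0). Let s₁(m) = −(2m² − 2m^{−2})/(m² + m^{−2} − 3) and t₁(m) = m·(ds₁/dm)(m). Then for all m ∈ ℂ with m ≠ 0 and m² + m^{−2} − 3 ≠ 0: ∑_{j=0}^{3} [ a_{j,1}(m)·s₁(m)·j + a_{j,2}(m) + a_{j,0}(m)·( (1/2)·s₁(m)²·j² + (1/2)·t₁(m)·j² ) ] = 0. Equivalently, in the abelian branch of the asymptotic expansion of the colored Jones polynomial of the figure-eight knot, the second coefficient S₂^A(u) is constant (its derivative vanishes identically). -/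
/-- `a_{j,2}(m) = 2 ((∂â_j/∂q)(m, 1) + (∂²â_j/∂q²)(m, 1))`, the second Taylor
coefficient in `ℏ` of `a_j(m, ℏ) = â_j(m, e^{2ℏ})` at `ℏ = 0`. -/
noncomputable def aCoeff2 (j : ℕ) (m : ℂ) : ℂ :=
  2 * (deriv (fun q => ahatFigEight j m q) 1 +
    deriv (deriv (fun q => ahatFigEight j m q)) 1)

/-- `s₁(m) = -(2m² - 2m⁻²)/(m² + m⁻² - 3)`, the derivative `S₁ᴬ'(u)` of the
first abelian-branch expansion coefficient, written in the variable `m = e^u`. -/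
noncomputable def s1FigEight (m : ℂ) : ℂ :=
  -(2 * m ^ 2 - 2 * m ^ (-2 : ℤ)) / (m ^ 2 + m ^ (-2 : ℤ) - 3)

/-- `t₁(m) = m · s₁'(m)`, i.e. `S₁ᴬ''(u)` in the variable `m = e^u`. -/
noncomputable def t1FigEight (m : ℂ) : ℂ := m * deriv s1FigEight m

/-!
After the powers of `q` in each factor are cancelled against the prefactors `1/(m²q⁵)` and
`1/(m²q⁴)`, every `â_j(m, ·)` is a polynomial in `q`, so the `a_{j,k}(m)` are values at `q = 1`
of its first two formal derivatives. For `m ≠ 0`, multiplying numerator and denominator by `m²`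
gives `s₁(m) = 2(1 - m⁴)/(m⁴ - 3m² + 1)`, hence `t₁(m) = 4m²(3m⁴ - 4m² + 3)/(m⁴ - 3m² + 1)²`,
and the hierarchy equation becomes an identity between rational functions of `m`.
-/

open Polynomial

theorem deriv_deriv_polynomial_eval {𝕜 : Type*} [NontriviallyNormedField 𝕜] (p : 𝕜[X]) (x : 𝕜) :
    deriv (deriv fun x => p.eval x) x = p.derivative.derivative.eval x := by
  have h : deriv (fun x => p.eval x) = fun x => p.derivative.eval x := funext fun _ => p.deriv
  rw [h, Polynomial.deriv]

noncomputable def ahatFigEightPoly : ℕ → ℂ → ℂ[X]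
  | 0, m =>
      C (m ^ 2) * X ^ 5 * (X - C (m ^ 2) * X ^ 3) * (X ^ 3 - C (m ^ 2) * X ^ 3) *
        (X + C (m ^ 2) * X ^ 3) * (X - C (m ^ 4) * X ^ 6) * (X ^ 3 - C (m ^ 4) * X ^ 6)
  | 1, m =>
      -C (m ^ 2)⁻¹ * X ^ 12 * (1 - C (m ^ 2) * X ^ 2) * (1 - C (m ^ 2) * X) *
        (1 + C (m ^ 2) * X) * (1 - C (m ^ 4) * X ^ 5) * (1 - C (m ^ 4) * X ^ 3) *
        (1 - 2 * C (m ^ 2) * X + C (m ^ 2) * X ^ 2 - C (m ^ 4) * X + C (m ^ 4) * X ^ 2 -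
          C (m ^ 4) * X ^ 3 + C (m ^ 6) * X ^ 2 - 2 * C (m ^ 6) * X ^ 3 + C (m ^ 8) * X ^ 4)
  | 2, m =>
      C (m ^ 2)⁻¹ * X ^ 11 * (1 - C (m ^ 2) * X ^ 2) ^ 2 * (1 + C (m ^ 2) * X ^ 2) *
        (1 - C (m ^ 4) * X ^ 3) * (1 - C (m ^ 4) * X) *
        (1 + C (m ^ 2) * X - 2 * C (m ^ 2) * X ^ 2 - C (m ^ 4) * X ^ 3 + C (m ^ 4) * X ^ 4 -
          C (m ^ 4) * X ^ 5 - 2 * C (m ^ 6) * X ^ 6 + C (m ^ 6) * X ^ 7 + C (m ^ 8) * X ^ 8)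
  | 3, m =>
      C (m ^ 2) * X ^ 4 * (X - C (m ^ 2) * X ^ 3) * (-1 + C (m ^ 2) * X ^ 3) *
        (X ^ 2 + C (m ^ 2) * X ^ 3) * (X ^ 3 - C (m ^ 4) * X ^ 6) * (X ^ 5 - C (m ^ 4) * X ^ 6)
  | _, _ => 0

theorem ahatFigEight_eq_eval (j : ℕ) (m q : ℂ) :
    ahatFigEight j m q = (ahatFigEightPoly j m).eval q := by
  match j with
  | 0 | 3 => simp [ahatFigEight, ahatFigEightPoly]
  | 1 | 2 =>
    rcases eq_or_ne q 0 with rfl | hq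
    · simp [ahatFigEight, ahatFigEightPoly]
    rcases eq_or_ne m 0 with rfl | hm
    · simp [ahatFigEight, ahatFigEightPoly]
    simp only [ahatFigEight, ahatFigEightPoly, eval_neg, eval_mul, eval_C, eval_pow, eval_X,
      eval_sub, eval_one, eval_add, eval_ofNat]
    field_simp
  | _ + 4 => simp [ahatFigEight, ahatFigEightPoly]

theorem aCoeff0_eq_eval (j : ℕ) (m : ℂ) : aCoeff0 j m = (ahatFigEightPoly j m).eval 1 :=
  ahatFigEight_eq_eval j m 1

theorem aCoeff1_eq_eval_derivative (j : ℕ) (m : ℂ) :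
    aCoeff1 j m = 2 * (derivative (ahatFigEightPoly j m)).eval 1 := by
  simp only [aCoeff1, ahatFigEight_eq_eval, Polynomial.deriv]

theorem aCoeff2_eq_eval_derivative (j : ℕ) (m : ℂ) :
    aCoeff2 j m = 2 * ((derivative (ahatFigEightPoly j m)).eval 1 +
      (derivative (derivative (ahatFigEightPoly j m))).eval 1) := by
  simp only [aCoeff2, ahatFigEight_eq_eval, Polynomial.deriv, deriv_deriv_polynomial_eval]

theorem pow_four_sub_three_mul_sq_add_one_eq {m : ℂ} (hm : m ≠ 0) :
    m ^ 4 - 3 * m ^ 2 + 1 = m ^ 2 * (m ^ 2 + m ^ (-2 : ℤ) - 3) := by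
  simp only [zpow_neg, zpow_ofNat]
  field_simp
  ring

theorem s1FigEight_eq_div {m : ℂ} (hm : m ≠ 0) :
    s1FigEight m = 2 * (1 - m ^ 4) / (m ^ 4 - 3 * m ^ 2 + 1) := by
  rw [s1FigEight, pow_four_sub_three_mul_sq_add_one_eq hm,
    ← mul_div_mul_left _ _ (pow_ne_zero 2 hm)]
  congr 1
  simp only [zpow_neg, zpow_ofNat]
  field_simp
  ring

theorem t1FigEight_eq_div {m : ℂ} (hm : m ≠ 0) (hD : m ^ 4 - 3 * m ^ 2 + 1 ≠ 0) :
    t1FigEight m = 4 * m ^ 2 * (3 * m ^ 4 - 4 * m ^ 2 + 3) / (m ^ 4 - 3 * m ^ 2 + 1) ^ 2 := by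
  have hs : s1FigEight =ᶠ[nhds m] fun x => 2 * (1 - x ^ 4) / (x ^ 4 - 3 * x ^ 2 + 1) :=
    (eventually_ne_nhds hm).mono fun _ hx => s1FigEight_eq_div hx
  have hN : HasDerivAt (fun x : ℂ => 2 * (1 - x ^ 4)) (2 * -(4 * m ^ 3)) m := by
    simpa using ((hasDerivAt_pow 4 m).const_sub 1).const_mul 2
  have hDen : HasDerivAt (fun x : ℂ => x ^ 4 - 3 * x ^ 2 + 1) (4 * m ^ 3 - 3 * (2 * m)) m := by
    simpa using ((hasDerivAt_pow 4 m).sub ((hasDerivAt_pow 2 m).const_mul 3)).add_const 1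
  have hr : HasDerivAt (fun x : ℂ => 2 * (1 - x ^ 4) / (x ^ 4 - 3 * x ^ 2 + 1))
      ((2 * -(4 * m ^ 3) * (m ^ 4 - 3 * m ^ 2 + 1) - 2 * (1 - m ^ 4) * (4 * m ^ 3 - 3 * (2 * m))) /
        (m ^ 4 - 3 * m ^ 2 + 1) ^ 2) m :=
    hN.div hDen hD
  rw [t1FigEight, hs.deriv_eq, hr.deriv]
  field_simp
  ring

set_option maxHeartbeats 1000000 in
/-- Second-order equation of the quantization hierarchy for the figure-eight
knot in the abelian branch: for `m ≠ 0` with `m² + m⁻² - 3 ≠ 0`,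
`∑_j [a_{j,1}(m) s₁(m) j + a_{j,2}(m) + a_{j,0}(m) ((1/2) s₁(m)² j² + (1/2) t₁(m) j²)] = 0`.
Equivalently, the second coefficient `S₂ᴬ(u)` of the abelian-branch asymptotic
expansion of the colored Jones polynomial of `4₁` is constant: its derivative
vanishes identically. -/
theorem figure_eight_abelian_S2_constant (m : ℂ) (hm : m ≠ 0)
    (hΔ : m ^ 2 + m ^ (-2 : ℤ) - 3 ≠ 0) :
    ∑ j ∈ Finset.range 4,
        (aCoeff1 j m * s1FigEight m * (j : ℂ) + aCoeff2 j m +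
          aCoeff0 j m * ((1 / 2) * s1FigEight m ^ 2 * (j : ℂ) ^ 2 +
            (1 / 2) * t1FigEight m * (j : ℂ) ^ 2)) = 0 := by
  have hD : m ^ 4 - 3 * m ^ 2 + 1 ≠ 0 := by
    rw [pow_four_sub_three_mul_sq_add_one_eq hm]
    exact mul_ne_zero (pow_ne_zero 2 hm) hΔ
  simp only [Finset.sum_range_succ, Finset.sum_range_zero, aCoeff0_eq_eval,
    aCoeff1_eq_eval_derivative, aCoeff2_eq_eval_derivative, s1FigEight_eq_div hm,
    t1FigEight_eq_div hm hD]
  simp only [ahatFigEightPoly, derivative_mul, derivative_sub, derivative_add, derivative_neg,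
    derivative_C, derivative_X, derivative_X_pow, derivative_sq, derivative_one, derivative_ofNat,
    derivative_zero, eval_mul, eval_sub, eval_add, eval_neg, eval_C, eval_X, eval_pow, eval_one,
    eval_ofNat, eval_zero, one_pow]
  -- the form in which `field_simp` writes the denominator
  have hD_horner : m ^ 2 * (m ^ 2 - 3) + 1 ≠ 0 := by
    intro h
    exact hD (by linear_combination h)
  field_simp
  ring
end
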